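/- Let (X, F) and (Y, G) be multiple-mapping dynamical systems on compact metric spaces, topologically conjugate via a homeomorphism T : X → Y with T(F(x)) = G(T(x)) for all x. Then F is Hausdorff metric accessible if and only if G is Hausdorff metric accessible. -/
import Mathlib


open Metric Set Filter

/-- `multiImage f₁ f₂ n x` is the set `Fⁿ(x) = {f_{i₁} ∘ ⋯ ∘ f_{iₙ}(x) : iⱼ ∈ {1,2}}`
for the multiple mapping `F = {f₁, f₂}`. -/
def multiImage {X : Type*} (f₁ f₂ : X → X) : ℕ → X → Set X
  | 0, x => {x}
  | n + 1, x => multiImage f₁ f₂ n (f₁ x) ∪ multiImage f₁ f₂ n (f₂ x)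

/-- Sensitivity of a single continuous self-map. -/
def Sensitive {X : Type*} [MetricSpace X] (f : X → X) : Prop :=
  ∃ δ > (0:ℝ), ∀ U : Set X, IsOpen U → U.Nonempty →
    ∃ x ∈ U, ∃ y ∈ U, ∃ n : ℕ, 1 ≤ n ∧ δ < dist (f^[n] x) (f^[n] y)

/-- Accessibility of a single continuous self-map. -/
def Accessible {X : Type*} [MetricSpace X] (f : X → X) : Prop :=
  ∀ ε > (0:ℝ), ∀ U V : Set X, IsOpen U → IsOpen V → U.Nonempty → V.Nonempty →
    ∃ x ∈ U, ∃ y ∈ V, ∃ n : ℕ, 1 ≤ n ∧ dist (f^[n] x) (f^[n] y) < ε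

/-- Hausdorff metric sensitivity of the multiple mapping `F = {f₁, f₂}`. -/
def HSensitive {X : Type*} [MetricSpace X] (f₁ f₂ : X → X) : Prop :=
  ∃ δ > (0:ℝ), ∀ U : Set X, IsOpen U → U.Nonempty →
    ∃ x ∈ U, ∃ y ∈ U, ∃ n : ℕ, 1 ≤ n ∧
      δ < hausdorffDist (multiImage f₁ f₂ n x) (multiImage f₁ f₂ n y)

/-- Hausdorff metric accessibility of the multiple mapping `F = {f₁, f₂}`. -/
def HAccessible {X : Type*} [MetricSpace X] (f₁ f₂ : X → X) : Prop :=
  ∀ ε > (0:ℝ), ∀ U V : Set X, IsOpen U → IsOpen V → U.Nonempty → V.Nonempty →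
    ∃ x ∈ U, ∃ y ∈ V, ∃ n : ℕ, 1 ≤ n ∧
      hausdorffDist (multiImage f₁ f₂ n x) (multiImage f₁ f₂ n y) < ε


lemma multiImage_nonempty {X : Type*} (f₁ f₂ : X → X) :
    ∀ (n : ℕ) (x : X), (multiImage f₁ f₂ n x).Nonempty
  | 0, x => ⟨x, rfl⟩
  | n + 1, x =>
      (multiImage_nonempty f₁ f₂ n (f₁ x)).mono Set.subset_union_left

lemma multiImage_image_conj {X Y : Type*} [TopologicalSpace X] [TopologicalSpace Y] (f₁ f₂ : X → X) (g₁ g₂ : Y → Y)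
    (T : X ≃ₜ Y) (hconj : ∀ x : X, T '' {f₁ x, f₂ x} = {g₁ (T x), g₂ (T x)}) :
    ∀ (n : ℕ) (x : X), T '' multiImage f₁ f₂ n x = multiImage g₁ g₂ n (T x) := by
  intro n
  induction n with
  | zero => intro x; simp [multiImage]
  | succ n ih =>
      intro x
      have hpair : ({T (f₁ x), T (f₂ x)} : Set Y) = {g₁ (T x), g₂ (T x)} := by
        rw [← Set.image_pair]; exact hconj x
      have key : multiImage g₁ g₂ n (T (f₁ x)) ∪ multiImage g₁ g₂ n (T (f₂ x)) =
          multiImage g₁ g₂ n (g₁ (T x)) ∪ multiImage g₁ g₂ n (g₂ (T x)) := by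
        have h1 : multiImage g₁ g₂ n (T (f₁ x)) ∪ multiImage g₁ g₂ n (T (f₂ x)) =
            ⋃ y ∈ ({T (f₁ x), T (f₂ x)} : Set Y), multiImage g₁ g₂ n y := by
          simp
        have h2 : multiImage g₁ g₂ n (g₁ (T x)) ∪ multiImage g₁ g₂ n (g₂ (T x)) =
            ⋃ y ∈ ({g₁ (T x), g₂ (T x)} : Set Y), multiImage g₁ g₂ n y := by
          simp
        rw [h1, h2, hpair]
      calc T '' multiImage f₁ f₂ (n + 1) x
          = T '' (multiImage f₁ f₂ n (f₁ x) ∪ multiImage f₁ f₂ n (f₂ x)) := rfl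
        _ = T '' multiImage f₁ f₂ n (f₁ x) ∪ T '' multiImage f₁ f₂ n (f₂ x) :=
            Set.image_union _ _ _
        _ = multiImage g₁ g₂ n (T (f₁ x)) ∪ multiImage g₁ g₂ n (T (f₂ x)) := by
            rw [ih, ih]
        _ = multiImage g₁ g₂ n (g₁ (T x)) ∪ multiImage g₁ g₂ n (g₂ (T x)) := key
        _ = multiImage g₁ g₂ (n + 1) (T x) := rfl

lemma hAccessible_of_conj_aux {X Y : Type*} [MetricSpace X] [CompactSpace X]
    [MetricSpace Y] [CompactSpace Y]
    (f₁ f₂ : X → X) (g₁ g₂ : Y → Y)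
    (T : X ≃ₜ Y) (hconj : ∀ x : X, T '' {f₁ x, f₂ x} = {g₁ (T x), g₂ (T x)})
    (h : HAccessible f₁ f₂) : HAccessible g₁ g₂ := by
  intro ε hε U V hU hV hUne hVne
  have hT : UniformContinuous T := CompactSpace.uniformContinuous_of_continuous T.continuous
  obtain ⟨δ, hδ, hδ'⟩ := Metric.uniformContinuous_iff.1 hT (ε / 2) (by positivity)
  obtain ⟨x, hx, y, hy, n, hn, hd⟩ := h δ hδ (T.symm '' U) (T.symm '' V)
    (T.symm.isOpenMap U hU) (T.symm.isOpenMap V hV) (hUne.image _) (hVne.image _)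
  have hTx : T x ∈ U := by
    obtain ⟨u, hu, rfl⟩ := hx
    simpa using hu
  have hTy : T y ∈ V := by
    obtain ⟨v, hv, rfl⟩ := hy
    simpa using hv
  refine ⟨T x, hTx, T y, hTy, n, hn, ?_⟩
  rw [← multiImage_image_conj f₁ f₂ g₁ g₂ T hconj,
      ← multiImage_image_conj f₁ f₂ g₁ g₂ T hconj]
  set A := multiImage f₁ f₂ n x with hA
  set B := multiImage f₁ f₂ n y with hB
  have hAne : A.Nonempty := multiImage_nonempty f₁ f₂ n x
  have hBne : B.Nonempty := multiImage_nonempty f₁ f₂ n y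
  have hfin : EMetric.hausdorffEdist A B ≠ ⊤ :=
    Metric.hausdorffEdist_ne_top_of_nonempty_of_bounded hAne hBne
      (Bornology.IsBounded.subset (isCompact_univ.isBounded) (Set.subset_univ _))
      (Bornology.IsBounded.subset (isCompact_univ.isBounded) (Set.subset_univ _))
  have hle : Metric.hausdorffDist (T '' A) (T '' B) ≤ ε / 2 := by
    apply Metric.hausdorffDist_le_of_mem_dist (by positivity)
    · rintro _ ⟨a, ha, rfl⟩
      obtain ⟨b, hb, hab⟩ := Metric.exists_dist_lt_of_hausdorffDist_lt ha hd hfin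
      exact ⟨T b, Set.mem_image_of_mem _ hb, le_of_lt (hδ' hab)⟩
    · rintro _ ⟨b, hb, rfl⟩
      obtain ⟨a, ha, hab⟩ := Metric.exists_dist_lt_of_hausdorffDist_lt' hb hd hfin
      exact ⟨T a, Set.mem_image_of_mem _ ha, le_of_lt (by simpa [dist_comm] using hδ' hab)⟩
  linarith

/-- Topological conjugacy preserves the relevant Hausdorff-metric chaotic property of
multiple mappings. -/
theorem hAccessible_iff_of_conj {X Y : Type*} [MetricSpace X] [CompactSpace X]
    [MetricSpace Y] [CompactSpace Y]
    (f₁ f₂ : X → X) (hf₁ : Continuous f₁) (hf₂ : Continuous f₂)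
    (g₁ g₂ : Y → Y) (hg₁ : Continuous g₁) (hg₂ : Continuous g₂)
    (T : X ≃ₜ Y) (hconj : ∀ x : X, T '' {f₁ x, f₂ x} = {g₁ (T x), g₂ (T x)}) :
    HAccessible f₁ f₂ ↔ HAccessible g₁ g₂ := by
  have hconj' : ∀ y : Y, T.symm '' {g₁ y, g₂ y} = {f₁ (T.symm y), f₂ (T.symm y)} := by
    intro y
    have h := hconj (T.symm y)
    rw [T.apply_symm_apply] at h
    rw [← h, ← Set.image_comp]
    simp
  constructor
  · exact hAccessible_of_conj_aux f₁ f₂ g₁ g₂ T hconj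
  · exact hAccessible_of_conj_aux g₁ g₂ f₁ f₂ T.symm hconj'
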